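/- arXiv:1008.3839 — 2 statements merged into one kernel-verified Lean document; each statement's English description precedes it below -/
import Mathlib

section
/- Let X and Y be standard Gaussian random variables with covariance Cov(X,Y) = 1 - c where 0 < c < 1/4. Then for a sufficiently large (a ≫ 1), P(X > a, Y > a(1 - c/4)) ≤ (1/(a² · 2π · c)) · e^{-a²/2} · (e^{-c a²/32} + e^{-3 c a²/8}). -/
/-!
Write `Y = (1 - c) X + σ Z` with `Z` standard Gaussian independent of `X` and
`σ = √(2c - c²)`. On the event `{X > a, Y > a(1 - c/4)}` either `X > a s` with
`s = (1 - 5c/8)/(1 - c)`, or `X ≤ a s` and then `σ Z > 3ca/8`, i.e. `Z > a r` with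
`r = 3c/(8σ)`. A union bound and independence give
`P(X > a s) + P(X > a) P(Z > a r)`, and the Mills-ratio bound
`P(N > t) ≤ e^{-t²/2}/(√(2π) t)` handles each tail. Since `s² > 1 + 3c/4` and
`r² > c/16`, both terms carry a spare factor `e^{-δ a²}`, which beats the polynomial
prefactors once `a` is large.
-/

open MeasureTheory ProbabilityTheory Real

/-- The joint law of a centered Gaussian pair with unit variances and covariance
`1 - c`. -/
noncomputable def bivGaussianLaw (c : ℝ) : Measure (ℝ × ℝ) :=
  Measure.map (fun z : ℝ × ℝ => (z.1, (1 - c) * z.1 + Real.sqrt (2 * c - c ^ 2) * z.2))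
    ((gaussianReal 0 1).prod (gaussianReal 0 1))

open Set Filter Topology

noncomputable def gaussianTailBound (t : ℝ) : ℝ := exp (-t ^ 2 / 2) / (√(2 * π) * t)

lemma integrable_mul_exp_neg_sq_div_two : Integrable fun x : ℝ => x * exp (-x ^ 2 / 2) := by
  simpa [neg_div, div_eq_inv_mul] using integrable_mul_exp_neg_mul_sq (b := 1 / 2) (by norm_num)

lemma integrable_exp_neg_sq_div_two : Integrable fun x : ℝ => exp (-x ^ 2 / 2) := by
  simpa [neg_div, div_eq_inv_mul] using integrable_exp_neg_mul_sq (b := 1 / 2) (by norm_num)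

lemma integral_Ioi_mul_exp_neg_sq_div_two (t : ℝ) :
    ∫ x in Ioi t, x * exp (-x ^ 2 / 2) = exp (-t ^ 2 / 2) := by
  have hderiv (x : ℝ) : HasDerivAt (fun x => -exp (-x ^ 2 / 2)) (x * exp (-x ^ 2 / 2)) x :=
    ((hasDerivAt_pow 2 x).neg.div_const 2).exp.neg.congr_deriv (by simp; ring)
  have hlim : Tendsto (fun x : ℝ => -exp (-x ^ 2 / 2)) atTop (𝓝 0) := by
    simpa [neg_div] using (tendsto_exp_neg_atTop_nhds_zero.comp
      ((tendsto_pow_atTop two_ne_zero).atTop_div_const (two_pos (α := ℝ)))).neg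
  rw [integral_Ioi_of_hasDerivAt_of_tendsto' (fun x _ => hderiv x)
    integrable_mul_exp_neg_sq_div_two.integrableOn hlim]
  ring

lemma gaussianReal_real_Ioi_le_gaussianTailBound {t : ℝ} (ht : 0 < t) :
    (gaussianReal 0 1).real (Ioi t) ≤ gaussianTailBound t := by
  have hpdf (x : ℝ) : gaussianPDFReal 0 1 x = (√(2 * π))⁻¹ * exp (-x ^ 2 / 2) := by
    simp [gaussianPDFReal]
  rw [measureReal_def, gaussianReal_apply_eq_integral 0 one_ne_zero, ENNReal.toReal_ofReal
    (setIntegral_nonneg measurableSet_Ioi fun x _ => gaussianPDFReal_nonneg 0 1 x)]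
  simp_rw [hpdf]
  rw [integral_const_mul]
  have hmono : ∫ x in Ioi t, exp (-x ^ 2 / 2) ≤ ∫ x in Ioi t, x * exp (-x ^ 2 / 2) / t := by
    refine setIntegral_mono_on integrable_exp_neg_sq_div_two.integrableOn
      (integrable_mul_exp_neg_sq_div_two.div_const t).integrableOn measurableSet_Ioi
      fun x hx => ?_
    rw [mul_div_right_comm]
    exact le_mul_of_one_le_left (exp_pos _).le ((one_le_div ht).2 (le_of_lt hx))
  calc (√(2 * π))⁻¹ * ∫ x in Ioi t, exp (-x ^ 2 / 2)
      ≤ (√(2 * π))⁻¹ * ∫ x in Ioi t, x * exp (-x ^ 2 / 2) / t :=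
        mul_le_mul_of_nonneg_left hmono (by positivity)
    _ = gaussianTailBound t := by
      rw [integral_div, integral_Ioi_mul_exp_neg_sq_div_two, gaussianTailBound]
      field_simp

lemma eventually_mul_le_exp_mul_sq (C : ℝ) {ε : ℝ} (hε : 0 < ε) :
    ∀ᶠ a in atTop, C * a ≤ exp (ε * a ^ 2) := by
  filter_upwards [eventually_ge_atTop (C / ε), eventually_ge_atTop 0] with a hCa ha
  calc C * a ≤ ε * a * a := by gcongr; rwa [div_le_iff₀' hε] at hCa
    _ ≤ ε * a ^ 2 + 1 := by nlinarith
    _ ≤ exp (ε * a ^ 2) := add_one_le_exp _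

lemma eventually_gaussianTailBound_mul_le {K κ s : ℝ} (hK : 0 < K) (hs0 : 0 < s)
    (hs : 1 + κ < s ^ 2) :
    ∀ᶠ a in atTop, gaussianTailBound (a * s)
      ≤ (a ^ 2 * (2 * π) * K)⁻¹ * exp (-a ^ 2 / 2) * exp (-κ * a ^ 2 / 2) := by
  set δ := (s ^ 2 - 1 - κ) / 2 with hδ
  filter_upwards [eventually_mul_le_exp_mul_sq (√(2 * π) * K / s) (by linarith : 0 < δ),
    eventually_gt_atTop 0] with a hKa ha
  rw [div_mul_eq_mul_div, div_le_iff₀ hs0] at hKa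
  have hexp : exp (-(a * s) ^ 2 / 2)
      = exp (-a ^ 2 / 2) * exp (-κ * a ^ 2 / 2) / exp (δ * a ^ 2) := by
    rw [hδ, ← exp_add, ← exp_sub]; ring_nf
  set E := exp (-a ^ 2 / 2) * exp (-κ * a ^ 2 / 2) with hE
  calc gaussianTailBound (a * s) = E / (√(2 * π) * a * (exp (δ * a ^ 2) * s)) := by
        rw [gaussianTailBound, hexp]; field_simp
    _ ≤ E / (√(2 * π) * a * (√(2 * π) * K * a)) := by gcongr
    _ = _ := by rw [hE]; field_simp; rw [sq_sqrt (by positivity)]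

lemma eventually_gaussianTailBound_mul_gaussianTailBound_le {K κ r : ℝ} (hK : 0 < K)
    (hr : 0 < r) (hκ : κ < r ^ 2) :
    ∀ᶠ a in atTop, gaussianTailBound a * gaussianTailBound (a * r)
      ≤ (a ^ 2 * (2 * π) * K)⁻¹ * exp (-a ^ 2 / 2) * exp (-κ * a ^ 2 / 2) := by
  set δ := (r ^ 2 - κ) / 2 with hδ
  have hlim : Tendsto (fun a : ℝ => r * exp (δ * a ^ 2)) atTop atTop :=
    (tendsto_exp_atTop.comp ((tendsto_pow_atTop two_ne_zero).const_mul_atTop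
      (by linarith))).const_mul_atTop hr
  filter_upwards [hlim.eventually_ge_atTop K, eventually_gt_atTop 0] with a hKa ha
  set E := exp (-a ^ 2 / 2) * exp (-κ * a ^ 2 / 2) with hE
  have hexp : exp (-(a * r) ^ 2 / 2) = exp (-κ * a ^ 2 / 2) / exp (δ * a ^ 2) := by
    rw [hδ, ← exp_sub]; ring_nf
  calc gaussianTailBound a * gaussianTailBound (a * r)
      = E / (a ^ 2 * (2 * π) * (r * exp (δ * a ^ 2))) := by
        rw [gaussianTailBound, gaussianTailBound, hexp, hE]
        field_simp
        rw [sq_sqrt (by positivity)]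
    _ ≤ E / (a ^ 2 * (2 * π) * K) := by gcongr
    _ = _ := by rw [hE]; ring

lemma measureReal_prod_setOf_lt_and_lt_linear_le {μ ν : Measure ℝ} [IsFiniteMeasure μ]
    [IsProbabilityMeasure ν] {ρ σ a b s t : ℝ} (hρ : 0 ≤ ρ) (hσ : 0 ≤ σ)
    (hst : ρ * s + σ * t ≤ b) :
    (μ.prod ν).real {z | a < z.1 ∧ b < ρ * z.1 + σ * z.2}
      ≤ μ.real (Ioi s) + μ.real (Ioi a) * ν.real (Ioi t) := by
  have hsub : {z : ℝ × ℝ | a < z.1 ∧ b < ρ * z.1 + σ * z.2}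
      ⊆ Ioi s ×ˢ univ ∪ Ioi a ×ˢ Ioi t := by
    rintro ⟨x, z⟩ ⟨hax, hb⟩
    by_contra! h
    simp only [mem_union, mem_prod, mem_Ioi, mem_univ, and_true, not_or, not_and, not_lt] at h
    linarith [mul_le_mul_of_nonneg_left h.1 hρ, mul_le_mul_of_nonneg_left (h.2 hax) hσ]
  calc _ ≤ (μ.prod ν).real (Ioi s ×ˢ univ ∪ Ioi a ×ˢ Ioi t) := measureReal_mono hsub
    _ ≤ _ := measureReal_union_le _ _
    _ = _ := by simp only [measureReal_prod_prod, probReal_univ, mul_one]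

instance isProbabilityMeasure_bivGaussianLaw (c : ℝ) :
    IsProbabilityMeasure (bivGaussianLaw c) :=
  Measure.isProbabilityMeasure_map (by fun_prop)

lemma measureReal_lt_and_lt_of_map_eq_bivGaussianLaw {Ω : Type*} [MeasurableSpace Ω]
    {μ : Measure Ω} {X Y : Ω → ℝ} {c : ℝ}
    (hlaw : μ.map (fun ω => (X ω, Y ω)) = bivGaussianLaw c) (a b : ℝ) :
    μ.real {ω | a < X ω ∧ b < Y ω} = ((gaussianReal 0 1).prod (gaussianReal 0 1)).real
      {z | a < z.1 ∧ b < (1 - c) * z.1 + √(2 * c - c ^ 2) * z.2} := by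
  have hXY : AEMeasurable (fun ω => (X ω, Y ω)) μ :=
    .of_map_ne_zero (hlaw ▸ IsProbabilityMeasure.ne_zero _)
  have hbox : MeasurableSet (Ioi a ×ˢ Ioi b) := measurableSet_Ioi.prod measurableSet_Ioi
  calc μ.real {ω | a < X ω ∧ b < Y ω}
      = (μ.map fun ω => (X ω, Y ω)).real (Ioi a ×ˢ Ioi b) := by
        rw [map_measureReal_apply_of_aemeasurable hXY hbox]; rfl
    _ = _ := by rw [hlaw, bivGaussianLaw, map_measureReal_apply (by fun_prop) hbox]; rfl

lemma exists_tail_thresholds {c : ℝ} (hc0 : 0 < c) (hc1 : c < 1) :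
    ∃ s r : ℝ, 0 < s ∧ 0 < r ∧ 1 + 3 * c / 4 < s ^ 2 ∧ c / 16 < r ^ 2 ∧
      (1 - c) * s + √(2 * c - c ^ 2) * r = 1 - c / 4 := by
  set σ := √(2 * c - c ^ 2)
  have hσ : 0 < σ := sqrt_pos.2 (by nlinarith)
  have hσsq : σ ^ 2 = 2 * c - c ^ 2 := sq_sqrt (by nlinarith)
  have h1c : 1 - c ≠ 0 := by linarith
  refine ⟨(1 - 5 * c / 8) / (1 - c), 3 * c / (8 * σ), div_pos (by linarith) (by linarith),
    by positivity, ?_, ?_, by field_simp; ring⟩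
  · rw [div_pow, lt_div_iff₀ (by nlinarith)]; nlinarith
  · rw [div_pow, lt_div_iff₀ (by positivity), mul_pow, hσsq]; nlinarith

theorem correlated_gaussian_tail_general {Ω : Type*} [MeasurableSpace Ω] (μ : Measure Ω)
    (X Y : Ω → ℝ) (c : ℝ) (hc : c ∈ Set.Ioo (0:ℝ) (1/4))
    (hlaw : Measure.map (fun ω => (X ω, Y ω)) μ = bivGaussianLaw c) :
    ∃ a₀ : ℝ, ∀ a : ℝ, a₀ ≤ a →
      (μ {ω | a < X ω ∧ a * (1 - c / 4) < Y ω}).toReal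
        ≤ (a ^ 2 * (2 * π) * c)⁻¹ * Real.exp (-a ^ 2 / 2) *
            (Real.exp (-c * a ^ 2 / 32) + Real.exp (-3 * c * a ^ 2 / 8)) := by
  obtain ⟨hc0, hc4⟩ := hc
  obtain ⟨s, r, hs0, hr0, hs, hr, hsplit⟩ := exists_tail_thresholds hc0 (by linarith)
  refine eventually_atTop.1 ?_
  filter_upwards [eventually_gaussianTailBound_mul_le hc0 hs0 hs,
    eventually_gaussianTailBound_mul_gaussianTailBound_le hc0 hr0 hr,
    eventually_gt_atTop 0] with a h₁ h₂ ha
  let ν := gaussianReal 0 1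
  have hν {t : ℝ} (ht : 0 < t) := gaussianReal_real_Ioi_le_gaussianTailBound ht
  calc (μ {ω | a < X ω ∧ a * (1 - c / 4) < Y ω}).toReal
      = (ν.prod ν).real
          {z | a < z.1 ∧ a * (1 - c / 4) < (1 - c) * z.1 + √(2 * c - c ^ 2) * z.2} :=
        measureReal_lt_and_lt_of_map_eq_bivGaussianLaw hlaw _ _
    _ ≤ ν.real (Ioi (a * s)) + ν.real (Ioi a) * ν.real (Ioi (a * r)) :=
        measureReal_prod_setOf_lt_and_lt_linear_le (by linarith) (sqrt_nonneg _)
          (by linear_combination a * hsplit)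
    _ ≤ gaussianTailBound (a * s) + gaussianTailBound a * gaussianTailBound (a * r) :=
        add_le_add (hν (by positivity)) (mul_le_mul (hν ha) (hν (by positivity))
          measureReal_nonneg (measureReal_nonneg.trans (hν ha)))
    _ ≤ _ := by
        rw [show -3 * c * a ^ 2 / 8 = -(3 * c / 4) * a ^ 2 / 2 by ring,
          show -c * a ^ 2 / 32 = -(c / 16) * a ^ 2 / 2 by ring]
        linarith

/-- For `X, Y` standard Gaussian with covariance `1 - c`, `0 < c < 1/4`, and all
sufficiently large `a`,
`P(X > a, Y > a(1-c/4)) ≤ (a² 2π c)⁻¹ e^{-a²/2} (e^{-ca²/32} + e^{-3ca²/8})`. -/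
theorem correlated_gaussian_tail {Ω : Type*} [MeasurableSpace Ω] (μ : Measure Ω)
    [IsProbabilityMeasure μ] (X Y : Ω → ℝ) (c : ℝ) (hc : c ∈ Set.Ioo (0:ℝ) (1/4))
    (hlaw : Measure.map (fun ω => (X ω, Y ω)) μ = bivGaussianLaw c) :
    ∃ a₀ : ℝ, ∀ a : ℝ, a₀ ≤ a →
      (μ {ω | a < X ω ∧ a * (1 - c / 4) < Y ω}).toReal
        ≤ (a ^ 2 * (2 * π) * c)⁻¹ * Real.exp (-a ^ 2 / 2) *
            (Real.exp (-c * a ^ 2 / 32) + Real.exp (-3 * c * a ^ 2 / 8)) :=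
  correlated_gaussian_tail_general μ X Y c hc hlaw
end

section
/- Let ν_n and ν be right-continuous nonincreasing functions from (0,∞) to [0,∞) with ∫_0^∞ e^{-uv} ν(u) du < ∞ for all v > 0, and suppose the Laplace transforms converge: for every v > 0, ∫_0^∞ e^{-uv} ν_n(u) du → ∫_0^∞ e^{-uv} ν(u) du. If ν is continuous, then ν_n(u) → ν(u) for every u > 0. -/
open MeasureTheory Real Set Filter Topology Polynomial

/-!
Weight the tails by `e^{-u}` and substitute `x = e^{-u}`: the measures `e^{-u} ν_n(u) du` on
`(0, ∞)` become finite measures on `[0, 1]` whose moments `∫ x^k` are the Laplace transforms at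
`k + 1`. Convergence of these moments, with bounded total masses, gives by Weierstrass
approximation convergence against every continuous function on `[0, 1]`, and hence convergence
of the masses of the tails `(b, ∞)`, since the limit measure has no atoms. An antitone function is
squeezed on `[x, y]` between its endpoint values times `e^{-x} - e^{-y}`, so continuity of `ν`
turns convergence of the masses of short intervals into pointwise convergence.
-/

noncomputable def laplaceIoi (f : ℝ → ℝ) (v : ℝ) : ℝ :=
  ∫ u in Ioi 0, exp (-u * v) * f u

/-- The integral of `g` against the image of the measure `e^{-u} f(u) du` on `(0, ∞)` under
`u ↦ e^{-u}`. -/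
noncomputable def expPairing (f g : ℝ → ℝ) : ℝ :=
  ∫ u in Ioi 0, g (exp (-u)) * (exp (-u) * f u)

structure TendstoLaplaceIoi {ι : Type*} (F : ι → ℝ → ℝ) (l : Filter ι) (f : ℝ → ℝ) :
    Prop where
  integrableOn : ∀ i, ∀ v > 0, IntegrableOn (fun u => exp (-u * v) * F i u) (Ioi 0)
  integrableOn_limit : ∀ v > 0, IntegrableOn (fun u => exp (-u * v) * f u) (Ioi 0)
  tendsto : ∀ v > 0, Tendsto (fun i => laplaceIoi (F i) v) l (𝓝 (laplaceIoi f v))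

lemma tendsto_of_forall_approx {α E : Type*} [PseudoMetricSpace E] {l : Filter α} {a : α → E}
    {A : E} (h : ∀ ε > 0, ∃ b : α → E, ∃ B, Tendsto b l (𝓝 B) ∧
      (∀ᶠ i in l, dist (a i) (b i) ≤ ε) ∧ dist A B ≤ ε) :
    Tendsto a l (𝓝 A) := by
  refine Metric.tendsto_nhds.2 fun ε hε => ?_
  obtain ⟨b, B, hb, hab, hAB⟩ := h (ε / 3) (by positivity)
  filter_upwards [hab, Metric.tendsto_nhds.1 hb (ε / 3) (by positivity)] with i hi hbi
  calc dist (a i) A ≤ dist (a i) (b i) + dist (b i) B + dist A B := by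
        rw [dist_comm A B]; exact dist_triangle4 _ _ _ _
    _ < ε := by linarith

lemma exp_neg_mem_Icc {u : ℝ} (hu : 0 ≤ u) : exp (-u) ∈ Icc (0 : ℝ) 1 :=
  ⟨(exp_pos _).le, exp_le_one_iff.2 (neg_nonpos.2 hu)⟩

section Pairing

variable {f g h : ℝ → ℝ}

lemma integrableOn_expPairing (hf : IntegrableOn (fun u => exp (-u) * f u) (Ioi 0))
    (hg : ContinuousOn g (Icc 0 1)) :
    IntegrableOn (fun u => g (exp (-u)) * (exp (-u) * f u)) (Ioi 0) := by
  obtain ⟨C, hC⟩ := isCompact_Icc.exists_bound_of_continuousOn hg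
  have hmaps : MapsTo (fun u => exp (-u)) (Ioi 0) (Icc 0 1) := fun u hu => exp_neg_mem_Icc hu.le
  refine hf.bdd_mul (c := C) ?_ ?_
  · exact (hg.comp (by fun_prop) hmaps).aestronglyMeasurable measurableSet_Ioi
  · filter_upwards [ae_restrict_mem measurableSet_Ioi] with u hu using hC _ (hmaps hu)

lemma abs_expPairing_sub_le (hf0 : ∀ u ∈ Ioi 0, 0 ≤ f u)
    (hf : IntegrableOn (fun u => exp (-u) * f u) (Ioi 0))
    (hg : ContinuousOn g (Icc 0 1)) (hh : ContinuousOn h (Icc 0 1)) {δ : ℝ}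
    (hgh : ∀ x ∈ Icc 0 1, |g x - h x| ≤ δ) :
    |expPairing f g - expPairing f h| ≤ δ * ∫ u in Ioi 0, exp (-u) * f u := by
  have hgi := integrableOn_expPairing hf hg
  have hhi := integrableOn_expPairing hf hh
  rw [expPairing, expPairing, ← integral_sub hgi hhi, ← integral_const_mul]
  refine abs_integral_le_integral_abs.trans
    (setIntegral_mono_on (hgi.sub hhi).abs (hf.const_mul δ) measurableSet_Ioi fun u hu => ?_)
  have hw : 0 ≤ exp (-u) * f u := mul_nonneg (exp_pos _).le (hf0 u hu)
  rw [← sub_mul, abs_mul, abs_of_nonneg hw]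
  exact mul_le_mul_of_nonneg_right (hgh _ (exp_neg_mem_Icc hu.le)) hw

lemma expPairing_eval (hf : ∀ v > 0, IntegrableOn (fun u => exp (-u * v) * f u) (Ioi 0))
    (P : ℝ[X]) :
    expPairing f (fun x => P.eval x) =
      ∑ k ∈ Finset.range (P.natDegree + 1), P.coeff k * laplaceIoi f (k + 1) := by
  have hpow (u : ℝ) (k : ℕ) : exp (-u) ^ k * exp (-u) = exp (-u * (k + 1)) := by
    rw [← exp_nat_mul, ← exp_add]; ring_nf
  have hsum : (fun u => P.eval (exp (-u)) * (exp (-u) * f u)) = fun u =>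
      ∑ k ∈ Finset.range (P.natDegree + 1), P.coeff k * (exp (-u * (k + 1)) * f u) := by
    ext u
    simp only [eval_eq_sum_range, Finset.sum_mul, ← hpow]
    exact Finset.sum_congr rfl fun k _ => by ring
  simp only [expPairing, laplaceIoi, hsum, ← integral_const_mul]
  exact integral_finsetSum _ fun k _ => (hf (k + 1) (by positivity)).const_mul (P.coeff k)

/-- A Urysohn function in the variable `x = e^{-u}`, equal to `1` for `u ≥ b` and to `0` for
`u ≤ p`. -/
lemma exists_expPairing_between {p b : ℝ} (hp : 0 ≤ p) (hpb : p < b) :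
    ∃ g : ℝ → ℝ, Continuous g ∧ ∀ f : ℝ → ℝ, (∀ u ∈ Ioi 0, 0 ≤ f u) →
      IntegrableOn (fun u => exp (-u) * f u) (Ioi 0) →
      ∫ u in Ioi b, exp (-u) * f u ≤ expPairing f g ∧
        expPairing f g ≤ ∫ u in Ioi p, exp (-u) * f u := by
  obtain ⟨g, hg0, hg1, hg01⟩ := exists_continuous_zero_one_of_isClosed isClosed_Ici isClosed_Iic
    (Ici_disjoint_Iic.2 (not_le.2 (exp_lt_exp.2 (neg_lt_neg hpb))))
  refine ⟨g, g.continuous, fun f hf0 hf => ⟨?_, ?_⟩⟩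
  · have hgf := integrableOn_expPairing hf g.continuous.continuousOn
    calc ∫ u in Ioi b, exp (-u) * f u = ∫ u in Ioi b, g (exp (-u)) * (exp (-u) * f u) :=
          setIntegral_congr_fun measurableSet_Ioi fun u hu => by
            rw [hg1 (mem_Iic.2 (exp_le_exp.2 (neg_le_neg hu.le))), Pi.one_apply, one_mul]
      _ ≤ expPairing f g := by
          refine setIntegral_mono_set hgf ?_ (Ioi_subset_Ioi (hp.trans hpb.le)).eventuallyLE
          filter_upwards [ae_restrict_mem measurableSet_Ioi] with u hu
          exact mul_nonneg (hg01 _).1 (mul_nonneg (exp_pos _).le (hf0 u hu))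
  · calc expPairing f g = ∫ u in Ioi p, g (exp (-u)) * (exp (-u) * f u) := by
          refine setIntegral_eq_of_subset_of_forall_sdiff_eq_zero measurableSet_Ioi
            (Ioi_subset_Ioi hp) fun u hu => ?_
          rw [hg0 (mem_Ici.2 (exp_le_exp.2 (neg_le_neg (not_lt.1 hu.2)))), Pi.zero_apply,
            zero_mul]
      _ ≤ ∫ u in Ioi p, exp (-u) * f u := by
          refine setIntegral_mono_on
            ((integrableOn_expPairing hf g.continuous.continuousOn).mono_set
              (Ioi_subset_Ioi hp)) (hf.mono_set (Ioi_subset_Ioi hp)) measurableSet_Ioi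
            fun u hu => ?_
          exact mul_le_of_le_one_left (mul_nonneg (exp_pos _).le (hf0 u (hp.trans_lt hu)))
            (hg01 _).2

end Pairing

namespace TendstoLaplaceIoi

variable {ι : Type*} {l : Filter ι} {F : ι → ℝ → ℝ} {f : ℝ → ℝ}

lemma integrableOn_exp_mul (h : TendstoLaplaceIoi F l f) (i : ι) :
    IntegrableOn (fun u => exp (-u) * F i u) (Ioi 0) := by
  simpa using h.integrableOn i 1 one_pos

lemma integrableOn_exp_mul_limit (h : TendstoLaplaceIoi F l f) :
    IntegrableOn (fun u => exp (-u) * f u) (Ioi 0) := by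
  simpa using h.integrableOn_limit 1 one_pos

lemma tendsto_expPairing_eval (h : TendstoLaplaceIoi F l f) (P : ℝ[X]) :
    Tendsto (fun i => expPairing (F i) (fun x => P.eval x)) l
      (𝓝 (expPairing f (fun x => P.eval x))) := by
  simp only [expPairing_eval (h.integrableOn _), expPairing_eval h.integrableOn_limit]
  exact tendsto_finsetSum _ fun k _ => (h.tendsto (k + 1) (by positivity)).const_mul _

lemma tendsto_expPairing (h : TendstoLaplaceIoi F l f) (hF0 : ∀ i, ∀ u ∈ Ioi 0, 0 ≤ F i u)
    (hf0 : ∀ u ∈ Ioi 0, 0 ≤ f u) {g : ℝ → ℝ} (hg : ContinuousOn g (Icc 0 1)) :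
    Tendsto (fun i => expPairing (F i) g) l (𝓝 (expPairing f g)) := by
  set m := ∫ u in Ioi 0, exp (-u) * f u
  have hmass : Tendsto (fun i => ∫ u in Ioi 0, exp (-u) * F i u) l (𝓝 m) := by
    simpa [laplaceIoi] using h.tendsto 1 one_pos
  have hm : 0 ≤ m := setIntegral_nonneg measurableSet_Ioi fun u hu =>
    mul_nonneg (exp_pos _).le (hf0 u hu)
  refine tendsto_of_forall_approx fun ε hε => ?_
  obtain ⟨P, hP⟩ :=
    exists_polynomial_near_of_continuousOn 0 1 g hg (ε / (m + 1)) (by positivity)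
  have hgP : ∀ x ∈ Icc (0 : ℝ) 1, |g x - P.eval x| ≤ ε / (m + 1) := fun x hx => by
    rw [abs_sub_comm]; exact (hP x hx).le
  have hbound {M : ℝ} (hM : M ≤ m + 1) : ε / (m + 1) * M ≤ ε := by
    calc ε / (m + 1) * M ≤ ε / (m + 1) * (m + 1) := by gcongr
      _ = ε := div_mul_cancel₀ _ (by positivity)
  refine ⟨_, _, h.tendsto_expPairing_eval P, ?_, ?_⟩
  · filter_upwards [hmass.eventually (gt_mem_nhds (lt_add_one m))] with i hi
    exact (abs_expPairing_sub_le (hF0 i) (h.integrableOn_exp_mul i) hg P.continuousOn hgP).trans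
      (hbound hi.le)
  · exact (abs_expPairing_sub_le hf0 h.integrableOn_exp_mul_limit hg P.continuousOn hgP).trans
      (hbound (le_add_of_nonneg_right zero_le_one))

/-- Squeeze the tail `(b, ∞)` between Urysohn test functions; the squeeze is tight because the
tail of the limit is continuous in `b`. -/
lemma tendsto_integral_Ioi (h : TendstoLaplaceIoi F l f)
    (hF0 : ∀ i, ∀ u ∈ Ioi 0, 0 ≤ F i u) (hf0 : ∀ u ∈ Ioi 0, 0 ≤ f u) {b : ℝ} (hb : 0 < b) :
    Tendsto (fun i => ∫ u in Ioi b, exp (-u) * F i u) l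
      (𝓝 (∫ u in Ioi b, exp (-u) * f u)) := by
  have htail : ContinuousAt (fun b => ∫ u in Ioi b, exp (-u) * f u) b :=
    h.integrableOn_exp_mul_limit.continuousOn_Ici_primitive_Ioi.continuousAt (Ici_mem_nhds hb)
  refine tendsto_order.2 ⟨fun c hc => ?_, fun c hc => ?_⟩
  · obtain ⟨q, hcq, hbq⟩ := ((htail.eventually (lt_mem_nhds hc)).filter_mono nhdsWithin_le_nhds
      |>.and (self_mem_nhdsWithin : Ioi b ∈ 𝓝[>] b)).exists
    obtain ⟨g, hg, hgf⟩ := exists_expPairing_between hb.le hbq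
    have hlim := (hgf f hf0 h.integrableOn_exp_mul_limit).1
    filter_upwards [(h.tendsto_expPairing hF0 hf0 hg.continuousOn).eventually
      (lt_mem_nhds (hcq.trans_le hlim))] with i hi
    exact hi.trans_le (hgf (F i) (hF0 i) (h.integrableOn_exp_mul i)).2
  · obtain ⟨p, hpc, hp, hpb⟩ :=
      ((htail.eventually (gt_mem_nhds hc)).filter_mono nhdsWithin_le_nhds
        |>.and (Ioo_mem_nhdsLT hb)).exists
    obtain ⟨g, hg, hgf⟩ := exists_expPairing_between hp.le hpb
    have hlim := (hgf f hf0 h.integrableOn_exp_mul_limit).2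
    filter_upwards [(h.tendsto_expPairing hF0 hf0 hg.continuousOn).eventually
      (gt_mem_nhds (hlim.trans_lt hpc))] with i hi
    exact (hgf (F i) (hF0 i) (h.integrableOn_exp_mul i)).1.trans_lt hi

lemma tendsto_intervalIntegral (h : TendstoLaplaceIoi F l f)
    (hF0 : ∀ i, ∀ u ∈ Ioi 0, 0 ≤ F i u) (hf0 : ∀ u ∈ Ioi 0, 0 ≤ f u) {x y : ℝ} (hx : 0 < x)
    (hxy : x ≤ y) :
    Tendsto (fun i => ∫ u in x..y, exp (-u) * F i u) l
      (𝓝 (∫ u in x..y, exp (-u) * f u)) := by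
  have hdiff {g : ℝ → ℝ} (hg : IntegrableOn (fun u => exp (-u) * g u) (Ioi 0)) :
      ∫ u in x..y, exp (-u) * g u =
        (∫ u in Ioi x, exp (-u) * g u) - ∫ u in Ioi y, exp (-u) * g u :=
    (intervalIntegral.integral_Ioi_sub_Ioi (hg.mono_set (Ioi_subset_Ioi hx.le)) hxy).symm
  simp only [hdiff (h.integrableOn_exp_mul _), hdiff h.integrableOn_exp_mul_limit]
  exact (h.tendsto_integral_Ioi hF0 hf0 hx).sub (h.tendsto_integral_Ioi hF0 hf0 (hx.trans_le hxy))

end TendstoLaplaceIoi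

section Antitone

variable {f : ℝ → ℝ} {x y : ℝ}

lemma intervalIntegrable_exp_mul_of_antitoneOn (hxy : x ≤ y) (hf : AntitoneOn f (Icc x y)) :
    IntervalIntegrable (fun u => exp (-u) * f u) volume x y :=
  (AntitoneOn.intervalIntegrable (by rwa [uIcc_of_le hxy])).continuousOn_mul (by fun_prop)

lemma intervalIntegral_exp_mul_le_of_antitoneOn (hxy : x ≤ y) (hf : AntitoneOn f (Icc x y)) :
    ∫ u in x..y, exp (-u) * f u ≤ f x * (exp (-x) - exp (-y)) := by
  calc ∫ u in x..y, exp (-u) * f u ≤ ∫ u in x..y, exp (-u) * f x :=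
        intervalIntegral.integral_mono_on hxy (intervalIntegrable_exp_mul_of_antitoneOn hxy hf)
          (Continuous.intervalIntegrable (by fun_prop) _ _) fun u hu =>
            mul_le_mul_of_nonneg_left (hf (left_mem_Icc.2 hxy) hu hu.1) (exp_pos _).le
    _ = f x * (exp (-x) - exp (-y)) := by simp [mul_comm]

lemma le_intervalIntegral_exp_mul_of_antitoneOn (hxy : x ≤ y) (hf : AntitoneOn f (Icc x y)) :
    f y * (exp (-x) - exp (-y)) ≤ ∫ u in x..y, exp (-u) * f u := by
  calc f y * (exp (-x) - exp (-y)) = ∫ u in x..y, exp (-u) * f y := by simp [mul_comm]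
    _ ≤ ∫ u in x..y, exp (-u) * f u :=
        intervalIntegral.integral_mono_on hxy (Continuous.intervalIntegrable (by fun_prop) _ _)
          (intervalIntegrable_exp_mul_of_antitoneOn hxy hf) fun u hu =>
            mul_le_mul_of_nonneg_left (hf hu (right_mem_Icc.2 hxy) hu.2) (exp_pos _).le

variable {ι : Type*} {l : Filter ι} {F : ι → ℝ → ℝ} {c : ℝ}

lemma eventually_apply_lt_of_tendsto_intervalIntegral (hxy : x < y)
    (hF : ∀ i, AntitoneOn (F i) (Icc x y)) (hf : AntitoneOn f (Icc x y))
    (hlim : Tendsto (fun i => ∫ u in x..y, exp (-u) * F i u) l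
      (𝓝 (∫ u in x..y, exp (-u) * f u)))
    (hc : f x < c) :
    ∀ᶠ i in l, F i y < c := by
  have hd : 0 < exp (-x) - exp (-y) := sub_pos.2 (exp_lt_exp.2 (neg_lt_neg hxy))
  have hlt := (intervalIntegral_exp_mul_le_of_antitoneOn hxy.le hf).trans_lt
    (mul_lt_mul_of_pos_right hc hd)
  filter_upwards [hlim.eventually (gt_mem_nhds hlt)] with i hi
  exact lt_of_mul_lt_mul_right
    ((le_intervalIntegral_exp_mul_of_antitoneOn hxy.le (hF i)).trans_lt hi) hd.le

lemma eventually_lt_apply_of_tendsto_intervalIntegral (hxy : x < y)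
    (hF : ∀ i, AntitoneOn (F i) (Icc x y)) (hf : AntitoneOn f (Icc x y))
    (hlim : Tendsto (fun i => ∫ u in x..y, exp (-u) * F i u) l
      (𝓝 (∫ u in x..y, exp (-u) * f u)))
    (hc : c < f y) :
    ∀ᶠ i in l, c < F i x := by
  have hd : 0 < exp (-x) - exp (-y) := sub_pos.2 (exp_lt_exp.2 (neg_lt_neg hxy))
  have hlt := (mul_lt_mul_of_pos_right hc hd).trans_le
    (le_intervalIntegral_exp_mul_of_antitoneOn hxy.le hf)
  filter_upwards [hlim.eventually (lt_mem_nhds hlt)] with i hi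
  exact lt_of_mul_lt_mul_right
    (hi.trans_le (intervalIntegral_exp_mul_le_of_antitoneOn hxy.le (hF i))) hd.le

end Antitone

theorem feller_continuity_tails_general (ν : ℝ → ℝ) (νn : ℕ → ℝ → ℝ)
    (hν_mono : AntitoneOn ν (Ioi 0))
    (hν_nonneg : ∀ u ∈ Ioi (0:ℝ), 0 ≤ ν u)
    (hν_cont : ContinuousOn ν (Ioi 0))
    (hνn_mono : ∀ n, AntitoneOn (νn n) (Ioi 0))
    (hνn_nonneg : ∀ n, ∀ u ∈ Ioi (0:ℝ), 0 ≤ νn n u)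
    (hν_int : ∀ v : ℝ, 0 < v →
      IntegrableOn (fun u => Real.exp (-u * v) * ν u) (Ioi 0))
    (hνn_int : ∀ n, ∀ v : ℝ, 0 < v →
      IntegrableOn (fun u => Real.exp (-u * v) * νn n u) (Ioi 0))
    (hconv : ∀ v : ℝ, 0 < v →
      Tendsto (fun n => ∫ u in Ioi (0:ℝ), Real.exp (-u * v) * νn n u) atTop
        (nhds (∫ u in Ioi (0:ℝ), Real.exp (-u * v) * ν u))) :
    ∀ u : ℝ, 0 < u → Tendsto (fun n => νn n u) atTop (nhds (ν u)) := by
  intro u hu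
  have h : TendstoLaplaceIoi νn atTop ν := ⟨hνn_int, hν_int, hconv⟩
  have hsub {x y : ℝ} (hx : 0 < x) : Icc x y ⊆ Ioi 0 := fun _ hz => hx.trans_le hz.1
  have hmono {x y : ℝ} (hx : 0 < x) :
      AntitoneOn ν (Icc x y) ∧ ∀ n, AntitoneOn (νn n) (Icc x y) :=
    ⟨hν_mono.mono (hsub hx), fun n => (hνn_mono n).mono (hsub hx)⟩
  have hνu : ContinuousAt ν u := hν_cont.continuousAt (Ioi_mem_nhds hu)
  refine tendsto_order.2 ⟨fun c hc => ?_, fun c hc => ?_⟩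
  · obtain ⟨y, hcy, huy⟩ := ((hνu.eventually (lt_mem_nhds hc)).filter_mono nhdsWithin_le_nhds
      |>.and (self_mem_nhdsWithin : Ioi u ∈ 𝓝[>] u)).exists
    exact eventually_lt_apply_of_tendsto_intervalIntegral huy (hmono hu).2 (hmono hu).1
      (h.tendsto_intervalIntegral hνn_nonneg hν_nonneg hu huy.le) hcy
  · obtain ⟨x, hxc, hx, hxu⟩ :=
      ((hνu.eventually (gt_mem_nhds hc)).filter_mono nhdsWithin_le_nhds
        |>.and (Ioo_mem_nhdsLT hu)).exists
    exact eventually_apply_lt_of_tendsto_intervalIntegral hxu (hmono hx).2 (hmono hx).1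
      (h.tendsto_intervalIntegral hνn_nonneg hν_nonneg hx hxu.le) hxc

/-- Feller's extended continuity theorem for Laplace transforms of tails:
if the `ν_n` are nonincreasing right-continuous nonnegative functions on `(0,∞)`
whose Laplace transforms converge to that of a continuous nonincreasing `ν`
(with finite Laplace transform), then `ν_n(u) → ν(u)` for every `u > 0`. -/
theorem feller_continuity_tails (ν : ℝ → ℝ) (νn : ℕ → ℝ → ℝ)
    (hν_mono : AntitoneOn ν (Ioi 0))
    (hν_nonneg : ∀ u ∈ Ioi (0:ℝ), 0 ≤ ν u)
    (hν_cont : ContinuousOn ν (Ioi 0))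
    (hνn_mono : ∀ n, AntitoneOn (νn n) (Ioi 0))
    (hνn_nonneg : ∀ n, ∀ u ∈ Ioi (0:ℝ), 0 ≤ νn n u)
    (hνn_rc : ∀ n, ∀ u ∈ Ioi (0:ℝ), ContinuousWithinAt (νn n) (Ici u) u)
    (hν_int : ∀ v : ℝ, 0 < v →
      IntegrableOn (fun u => Real.exp (-u * v) * ν u) (Ioi 0))
    (hνn_int : ∀ n, ∀ v : ℝ, 0 < v →
      IntegrableOn (fun u => Real.exp (-u * v) * νn n u) (Ioi 0))
    (hconv : ∀ v : ℝ, 0 < v →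
      Tendsto (fun n => ∫ u in Ioi (0:ℝ), Real.exp (-u * v) * νn n u) atTop
        (nhds (∫ u in Ioi (0:ℝ), Real.exp (-u * v) * ν u))) :
    ∀ u : ℝ, 0 < u → Tendsto (fun n => νn n u) atTop (nhds (ν u)) :=
  feller_continuity_tails_general ν νn hν_mono hν_nonneg hν_cont hνn_mono hνn_nonneg hν_int hνn_int
    hconv
end
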